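/- arXiv:1407.5863 — 3 statements merged into one kernel-verified Lean document; each statement's English description precedes it below -/
import Mathlib

section
/- Let X be a complete metric space of diameter at most π/2 in which every pair of points lies on a closed geodesic of length π, and suppose X is a Riemannian manifold of sectional curvature ≥ 1. For p ∈ X define Ant(p) = {q ∈ X : d(p,q) ≥ π/2}. Then Ant(p) is a totally geodesic submanifold of X: it contains, together with any two of its distinct points, every geodesic of length < π joining them. -/
open Real

/-- A unit-speed local geodesic on the parameter interval `[a,b]`. -/
def IsLocalGeodesic {X : Type*} [MetricSpace X] (c : ℝ → X) (a b : ℝ) : Prop :=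
  ∀ t, a ≤ t → t ≤ b → ∃ ε > 0, ∀ s u, a ≤ s → u ≤ b →
    t - ε ≤ s → s ≤ u → u ≤ t + ε → dist (c s) (c u) = u - s

/-- A closed geodesic of length (period) `π`: a `π`-periodic curve which is a unit-speed
local geodesic around every parameter. -/
def IsClosedGeodesicPi {X : Type*} [MetricSpace X] (c : ℝ → X) : Prop :=
  (∀ t, c (t + π) = c t) ∧
  ∀ t : ℝ, ∃ ε > 0, ∀ s u, t - ε ≤ s → s ≤ u → u ≤ t + ε → dist (c s) (c u) = u - s

/-- Sectional curvature `≥ 1`, encoded by the spherical (Toponogov) distance comparison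
along unit-speed geodesics of length `< π`:
`cos d(p, c(t)) · sin L ≤ cos d(p, c(0)) · sin (L - t) + cos d(p, c(L)) · sin t`. -/
def CurvGeOne (X : Type*) [MetricSpace X] : Prop :=
  ∀ (p : X) (c : ℝ → X) (L : ℝ), 0 < L → L < π → IsLocalGeodesic c 0 L →
    ∀ t, 0 ≤ t → t ≤ L →
      Real.cos (dist p (c t)) * Real.sin L ≤
        Real.cos (dist p (c 0)) * Real.sin (L - t) + Real.cos (dist p (c L)) * Real.sin t

/-!
By the diameter bound, both endpoints of the geodesic are at distance exactly `π/2` from `p`,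
so the cosines of these distances are `≤ 0`. In the spherical comparison inequality the weights
`sin (L - t)` and `sin t` are nonnegative and `sin L` is positive, so `cos d(p, c t) ≤ 0`,
which for a nonnegative distance means `d(p, c t) ≥ π/2`.
-/

theorem Real.pi_div_two_le_of_cos_nonpos {x : ℝ} (hx : 0 ≤ x) (hcos : cos x ≤ 0) :
    π / 2 ≤ x := by
  by_contra! hlt
  exact (cos_pos_of_mem_Ioo ⟨by linarith [pi_pos], hlt⟩).not_ge hcos

theorem CurvGeOne.cos_dist_nonpos {X : Type*} [MetricSpace X] (hcurv : CurvGeOne X) (p : X)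
    {c : ℝ → X} {L : ℝ} (h0 : 0 < L) (hL : L < π) (hc : IsLocalGeodesic c 0 L)
    (hstart : cos (dist p (c 0)) ≤ 0) (hend : cos (dist p (c L)) ≤ 0)
    {t : ℝ} (ht0 : 0 ≤ t) (htL : t ≤ L) : cos (dist p (c t)) ≤ 0 := by
  have hsinL : 0 < sin L := sin_pos_of_pos_of_lt_pi h0 hL
  have hsin_rest : 0 ≤ sin (L - t) := sin_nonneg_of_nonneg_of_le_pi (by linarith) (by linarith)
  have hsin_t : 0 ≤ sin t := sin_nonneg_of_nonneg_of_le_pi ht0 (by linarith)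
  have hcomp := hcurv p c L h0 hL hc t ht0 htL
  have hrhs : cos (dist p (c 0)) * sin (L - t) + cos (dist p (c L)) * sin t ≤ 0 :=
    add_nonpos (mul_nonpos_of_nonpos_of_nonneg hstart hsin_rest)
      (mul_nonpos_of_nonpos_of_nonneg hend hsin_t)
  exact nonpos_of_mul_nonpos_left (hcomp.trans hrhs) hsinL

theorem antipodal_set_totally_geodesic_general {X : Type*} [MetricSpace X]
    (hdiam : ∀ x y : X, dist x y ≤ π / 2)
    (hcurv : CurvGeOne X)
    (p q₁ q₂ : X) (hq₁ : π / 2 ≤ dist p q₁) (hq₂ : π / 2 ≤ dist p q₂)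
    (c : ℝ → X) (L : ℝ) (h0 : 0 < L) (hL : L < π)
    (hc : IsLocalGeodesic c 0 L) (hc0 : c 0 = q₁) (hcL : c L = q₂) :
    ∀ t, 0 ≤ t → t ≤ L → π / 2 ≤ dist p (c t) := by
  intro t ht0 htL
  have hcos_antipodal : ∀ q, π / 2 ≤ dist p q → cos (dist p q) ≤ 0 := fun q hq =>
    cos_nonpos_of_pi_div_two_le_of_le hq (by linarith [hdiam p q, pi_pos])
  subst hc0 hcL
  exact pi_div_two_le_of_cos_nonpos dist_nonneg
    (hcurv.cos_dist_nonpos p h0 hL hc (hcos_antipodal _ hq₁) (hcos_antipodal _ hq₂) ht0 htL)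

/-- Let `X` be a complete metric space of diameter at most `π/2` in which every pair of
points lies on a closed geodesic of length `π`, with curvature `≥ 1` (in the comparison
sense).  For `p ∈ X` let `Ant p = {q : d(p,q) ≥ π/2}`.  Then `Ant p` contains, together
with any two of its points, every geodesic of length `< π` joining them; i.e. it is
totally geodesic in `X`. -/
theorem antipodal_set_totally_geodesic {X : Type*} [MetricSpace X] [CompleteSpace X]
    (hdiam : ∀ x y : X, dist x y ≤ π / 2)
    (hclosed : ∀ x y : X, ∃ c : ℝ → X, IsClosedGeodesicPi c ∧ (∃ s, c s = x) ∧ ∃ t, c t = y)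
    (hcurv : CurvGeOne X)
    (p q₁ q₂ : X) (hq₁ : π / 2 ≤ dist p q₁) (hq₂ : π / 2 ≤ dist p q₂)
    (c : ℝ → X) (L : ℝ) (h0 : 0 < L) (hL : L < π)
    (hc : IsLocalGeodesic c 0 L) (hc0 : c 0 = q₁) (hcL : c L = q₂) :
    ∀ t, 0 ≤ t → t ≤ L → π / 2 ≤ dist p (c t) :=
  antipodal_set_totally_geodesic_general hdiam hcurv p q₁ q₂ hq₁ hq₂ c L h0 hL hc hc0 hcL
end

section
/- Let G = U(1) × Sp(n) (n ≥ 2) act on H^n ⊕ H^n by (z, A)·(u, v) = (A u z^r, A v z^s) where z ∈ U(1) acts by right scalar multiplication by the complex unit z taken to integer powers r and s, and A ∈ Sp(n) acts by quaternionic-linear left multiplication. If r ≠ ±s, then the slice representation at the point (u, 0) with u a unit vector, namely the action of the isotropy group on the normal space to the orbit, is non-polar; hence the representation is infinitesimally polar only if r = ±s. -/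
open Quaternion

noncomputable section

/-- A complex number viewed as a quaternion. -/
def czq (z : ℂ) : ℍ[ℝ] := ⟨z.re, z.im, 0, 0⟩

variable (n : ℕ) (r s : ℤ)

/-- The representation space `ℍⁿ ⊕ ℍⁿ`. -/
abbrev VV (n : ℕ) := (Fin n → ℍ[ℝ]) × (Fin n → ℍ[ℝ])

/-- The ambient parameter space for the group `U(1) × Sp(n)`. -/
abbrev AA (n : ℕ) := ℂ × Matrix (Fin n) (Fin n) ℍ[ℝ]

/-- Membership in the group `U(1) × Sp(n)` (`Sp(n)` as quaternionic unitary matrices). -/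
def inG (g : AA n) : Prop := ‖g.1‖ = 1 ∧ g.2 ∈ unitary (Matrix (Fin n) (Fin n) ℍ[ℝ])

/-- The action of `(z, A) ∈ U(1) × Sp(n)` on `ℍⁿ ⊕ ℍⁿ`:
`(z, A) · (u, v) = (A u z^r, A v z^s)`. -/
def act (g : AA n) (x : VV n) : VV n :=
  (fun i => g.2.mulVec x.1 i * czq (g.1 ^ r), fun i => g.2.mulVec x.2 i * czq (g.1 ^ s))

/-- The real inner product on `ℍⁿ ⊕ ℍⁿ`. -/
def ip (x y : VV n) : ℝ :=
  (∑ i, (star (x.1 i) * y.1 i).re) + ∑ i, (star (x.2 i) * y.2 i).re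

/-- The set of tangent vectors at `x` to the orbit of the subgroup cut out by `P`:
derivatives at `t = 0` of curves through the identity in the group, applied to `x`. -/
def orbitTangent (P : AA n → Prop) (x : VV n) : Set (VV n) :=
  {w | ∃ g : ℝ → AA n, (∀ t, P (g t)) ∧ g 0 = 1 ∧
    HasDerivAt (fun t => act n r s (g t) x) w 0}

/-- The isotropy condition at `p`. -/
def inIso (p : VV n) (g : AA n) : Prop := inG n g ∧ act n r s g p = p

/-- The normal space to the orbit of `G` at `p`. -/
def normalSet (p : VV n) : Set (VV n) :=
  {w | ∀ τ ∈ orbitTangent n r s (inG n) p, ip n w τ = 0}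

/-- Polarity of the slice representation at `p`: the isotropy group acts on the normal
space to the orbit, and there is a subspace `Sig` of the normal space meeting every
isotropy orbit in the normal space, orthogonally. -/
def SliceIsPolarAt (p : VV n) : Prop :=
  ∃ Sig : Submodule ℝ (VV n),
    (Sig : Set (VV n)) ⊆ normalSet n r s p ∧
    (∀ w ∈ normalSet n r s p, ∃ g, inIso n r s p g ∧ act n r s g w ∈ Sig) ∧
    (∀ σ ∈ Sig, ∀ w ∈ orbitTangent n r s (inIso n r s p) σ, ∀ τ ∈ Sig, ip n w τ = 0)

/-- Infinitesimal polarity: all slice representations at nonzero vectors are polar. -/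
def InfinitesimallyPolar : Prop := ∀ p : VV n, p ≠ 0 → SliceIsPolarAt n r s p

/-!
The normal space at `(u, 0)` contains the line `{(0, u q)}`; writing `q = a + b j`, the isotropy
group acts on it through `z ∈ U(1)` by `(a, b) ↦ (z^(s-r) a, z^(-(r+s)) b)`, with both weights
nonzero when `r ≠ ±s`. A section `Σ` meets the orbits of `(1, 0)` and `(0, 1)` in points
`(c₁, 0)` and `(0, c₂)` of the unit torus, and orthogonality to the orbit tangents there confines
the points of `Σ` on the line to `ℝ c₁ × ℝ c₂`. So the orbit of each `(1, w)`, `|w| = 1`, passes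
through one of `(±c₁, ±c₂)`, which allows only finitely many `w`.
-/

open ComplexConjugate

/-- `a + b j`, identifying `ℍ = ℂ ⊕ ℂ j`. -/
def cq (a b : ℂ) : ℍ[ℝ] := ⟨a.re, a.im, b.re, b.im⟩

@[simp] lemma czq_re (z : ℂ) : (czq z).re = z.re := rfl
@[simp] lemma czq_imI (z : ℂ) : (czq z).imI = z.im := rfl
@[simp] lemma czq_imJ (z : ℂ) : (czq z).imJ = 0 := rfl
@[simp] lemma czq_imK (z : ℂ) : (czq z).imK = 0 := rfl
@[simp] lemma cq_re (a b : ℂ) : (cq a b).re = a.re := rfl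
@[simp] lemma cq_imI (a b : ℂ) : (cq a b).imI = a.im := rfl
@[simp] lemma cq_imJ (a b : ℂ) : (cq a b).imJ = b.re := rfl
@[simp] lemma cq_imK (a b : ℂ) : (cq a b).imK = b.im := rfl

lemma czq_one : czq 1 = 1 := by
  ext <;> simp

lemma czq_mul (z w : ℂ) : czq (z * w) = czq z * czq w := by
  ext <;> simp [re_mul, imI_mul, imJ_mul, imK_mul, Complex.mul_re, Complex.mul_im]

lemma czq_mul_cq_mul_czq (z a b w : ℂ) :
    czq z * cq a b * czq w = cq (z * a * w) (z * b * conj w) := by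
  ext <;> simp [re_mul, imI_mul, imJ_mul, imK_mul, Complex.mul_re, Complex.mul_im]

lemma re_star_cq_mul_cq (a b a' b' : ℂ) :
    (star (cq a b) * cq a' b').re = (conj a * a').re + (conj b * b').re := by
  simp [re_mul, Complex.mul_re]
  ring

lemma czq_mem_unitary {z : ℂ} (hz : ‖z‖ = 1) : czq z ∈ unitary ℍ[ℝ] := by
  have hsq : z.re * z.re + z.im * z.im = 1 := by
    rw [← Complex.normSq_apply, Complex.normSq_eq_norm_sq, hz, one_pow]
  have hstar : star (czq z) * czq z = 1 := by
    ext <;> simp [re_mul, imI_mul, imJ_mul, imK_mul, hsq, mul_comm]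
  exact ⟨hstar, by rw [self_mul_star, ← star_mul_self, hstar]⟩

lemma sum_star_mul_self_eq_one {N : ℕ} {u : Fin N → ℍ[ℝ]}
    (hu : (∑ i, (star (u i) * u i).re) = 1) : ∑ i, star (u i) * u i = 1 := by
  have h : ∀ i, star (u i) * u i = algebraMap ℝ ℍ[ℝ] (star (u i) * u i).re := fun i => by
    rw [algebraMap_def, star_mul_self, re_coe]
  rw [Finset.sum_congr rfl fun i _ => h i, ← map_sum, hu, map_one]

lemma re_conj_I_mul_mul (k : ℝ) (c w : ℂ) :
    (conj (Complex.I * k * c) * w).re = k * (conj c * w).im := by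
  simp [Complex.mul_re, Complex.mul_im]
  ring

lemma eq_or_eq_neg_of_im_conj_mul_eq_zero {c w : ℂ} (hc : ‖c‖ = 1) (hw : ‖w‖ = 1)
    (h : (conj c * w).im = 0) : w = c ∨ w = -c := by
  have hreal : conj c * w = ((conj c * w).re : ℂ) := Complex.ext rfl (by simp [h])
  have hnorm : |(conj c * w).re| = 1 := by
    rw [← Real.norm_eq_abs, ← Complex.norm_real, ← hreal, norm_mul, Complex.norm_conj, hc, hw,
      one_mul]
  have hw_eq : w = c * (conj c * w) := by
    rw [← mul_assoc, Complex.mul_conj, Complex.normSq_eq_norm_sq, hc]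
    simp
  rcases abs_eq zero_le_one |>.1 hnorm with h1 | h1
  · left; rw [hw_eq, hreal, h1]; simp
  · right; rw [hw_eq, hreal, h1]; simp

lemma finite_setOf_zpow_eq {k : ℤ} (hk : k ≠ 0) (c : ℂ) : {z : ℂ | z ^ k = c}.Finite := by
  have hm : 0 < k.natAbs := Int.natAbs_pos.mpr hk
  have nthRoots_finite : ∀ d : ℂ, {z : ℂ | z ^ k.natAbs = d}.Finite := fun d =>
    (Polynomial.nthRoots k.natAbs d).toFinset.finite_toSet.subset fun z hz => by
      simpa [Polynomial.mem_nthRoots hm] using hz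
  refine ((nthRoots_finite c).union (nthRoots_finite c⁻¹)).subset fun z (hz : z ^ k = c) => ?_
  rcases Int.natAbs_eq k with h | h <;> rw [h] at hz
  · exact .inl ((zpow_natCast z _).symm.trans hz)
  · rw [zpow_neg, zpow_natCast] at hz
    exact .inr (inv_eq_iff_eq_inv.mp hz)

lemma finite_setOf_eq_mul_zpow {k : ℤ} (hk : k ≠ 0) (m : ℤ) (c₁ c₂ : ℂ) :
    {w : ℂ | ∃ z : ℂ, (z ^ k = c₁ ∨ z ^ k = -c₁) ∧
      (w = c₂ * z ^ m ∨ w = -(c₂ * z ^ m))}.Finite := by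
  have hroots : {z : ℂ | z ^ k = c₁ ∨ z ^ k = -c₁}.Finite :=
    (finite_setOf_zpow_eq hk c₁).union (finite_setOf_zpow_eq hk (-c₁))
  refine (hroots.biUnion fun z _ => (Set.toFinite {c₂ * z ^ m, -(c₂ * z ^ m)})).subset ?_
  rintro w ⟨z, hz, hw⟩
  exact Set.mem_biUnion hz hw

lemma infinite_setOf_norm_eq_one : {w : ℂ | ‖w‖ = 1}.Infinite := by
  have hsphere : {w : ℂ | ‖w‖ = 1} = Metric.sphere 0 1 := by ext; simp
  rw [hsphere]
  refine (isPreconnected_sphere (by simp) 0 1).infinite_of_nontrivial ⟨1, ?_, -1, ?_, ?_⟩ <;>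
    norm_num

lemma hasDerivAt_exp_mul_I_zpow (k : ℤ) :
    HasDerivAt (fun t : ℝ => Complex.exp (t * Complex.I) ^ k) (Complex.I * k) 0 := by
  have hexp : HasDerivAt (fun w : ℂ => Complex.exp (w * Complex.I))
      (Complex.exp ((0 : ℝ) * Complex.I) * Complex.I) ((0 : ℝ) : ℂ) :=
    ((hasDerivAt_id _).mul_const Complex.I).cexp.congr_deriv (by simp)
  have hzpow := (hasDerivAt_zpow k (Complex.exp ((0 : ℝ) * Complex.I))
    (.inl (Complex.exp_ne_zero _))).comp ((0 : ℝ) : ℂ) hexp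
  simpa [mul_comm] using hzpow.comp_ofReal

section LineRotation

variable {N : ℕ} (u : Fin N → ℍ[ℝ])

def outerMat (d : ℍ[ℝ]) : Matrix (Fin N) (Fin N) ℍ[ℝ] :=
  Matrix.of fun i j => u i * d * star (u j)

/-- For a unit vector `u`: `u x ↦ u (c x)` on the line `u ℍ`, the identity on its orthogonal
complement. -/
def lineRot (c : ℍ[ℝ]) : Matrix (Fin N) (Fin N) ℍ[ℝ] := 1 + outerMat u (c - 1)

lemma lineRot_one : lineRot u 1 = 1 := by
  ext i j : 1
  simp [lineRot, outerMat]

lemma star_outerMat (d : ℍ[ℝ]) : star (outerMat u d) = outerMat u (star d) := by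
  ext i j : 1
  simp [outerMat, Matrix.star_apply, mul_assoc]

lemma star_lineRot (c : ℍ[ℝ]) : star (lineRot u c) = lineRot u (star c) := by
  simp [lineRot, star_outerMat]

variable {u} (hu : ∑ i, star (u i) * u i = 1)
include hu

lemma outerMat_mul_outerMat (d e : ℍ[ℝ]) :
    outerMat u d * outerMat u e = outerMat u (d * e) := by
  ext i j : 1
  have hsum : ∑ m, u i * d * star (u m) * (u m * e * star (u j))
      = u i * d * (∑ m, star (u m) * u m) * (e * star (u j)) := by
    simp only [Finset.mul_sum, Finset.sum_mul, mul_assoc]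
  simp only [outerMat, Matrix.mul_apply, Matrix.of_apply, hsum, hu]
  noncomm_ring

lemma outerMat_mulVec (d x : ℍ[ℝ]) (i : Fin N) :
    (outerMat u d).mulVec (fun j => u j * x) i = u i * (d * x) := by
  have hsum : ∑ m, u i * d * star (u m) * (u m * x)
      = u i * d * (∑ m, star (u m) * u m) * x := by
    simp only [Finset.mul_sum, Finset.sum_mul, mul_assoc]
  simp only [Matrix.mulVec, dotProduct, outerMat, Matrix.of_apply, hsum, hu]
  noncomm_ring

lemma lineRot_mul_lineRot (c c' : ℍ[ℝ]) : lineRot u c * lineRot u c' = lineRot u (c * c') := by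
  have houter : outerMat u (c - 1) + outerMat u (c' - 1) + outerMat u ((c - 1) * (c' - 1))
      = outerMat u (c * c' - 1) := by
    ext i j : 1
    simp only [Matrix.add_apply, outerMat, Matrix.of_apply]
    noncomm_ring
  rw [lineRot, lineRot, lineRot, add_mul, mul_add, mul_add, outerMat_mul_outerMat hu, ← houter]
  noncomm_ring

lemma lineRot_mem_unitary {c : ℍ[ℝ]} (hc : c ∈ unitary ℍ[ℝ]) :
    lineRot u c ∈ unitary (Matrix (Fin N) (Fin N) ℍ[ℝ]) := by
  constructor <;>
    rw [star_lineRot, lineRot_mul_lineRot hu] <;>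
    simp [Unitary.star_mul_self_of_mem hc, Unitary.mul_star_self_of_mem hc, lineRot_one]

lemma lineRot_mulVec (c x : ℍ[ℝ]) :
    (lineRot u c).mulVec (fun j => u j * x) = fun i => u i * (c * x) := by
  ext i : 1
  rw [lineRot, Matrix.add_mulVec, Matrix.one_mulVec, Pi.add_apply, outerMat_mulVec hu]
  noncomm_ring

end LineRotation

section Slice

variable {n r s}

def lineVec (u : Fin n → ℍ[ℝ]) : ℂ × ℂ →L[ℝ] VV n :=
  LinearMap.toContinuousLinearMap
    { toFun := fun p => (0, fun i => u i * cq p.1 p.2)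
      map_add' := fun p q => by
        ext i <;> simp [re_mul, imI_mul, imJ_mul, imK_mul] <;> ring
      map_smul' := fun t p => by
        ext i <;> simp [re_mul, imI_mul, imJ_mul, imK_mul] <;> ring }

lemma lineVec_apply (u : Fin n → ℍ[ℝ]) (p : ℂ × ℂ) :
    lineVec u p = (0, fun i => u i * cq p.1 p.2) := rfl

lemma zero_prod_mem_normalSet (u v : Fin n → ℍ[ℝ]) :
    ((0, v) : VV n) ∈ normalSet n r s (u, 0) := by
  rintro τ ⟨g, -, -, hd⟩
  have hsnd : (fun t => (act n r s (g t) (u, 0)).2) = fun _ => 0 := by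
    funext t i
    simp [act]
  have hτ : τ.2 = 0 := by
    have := (ContinuousLinearMap.snd ℝ _ _).hasFDerivAt.comp_hasDerivAt 0 hd
    exact (hasDerivAt_const (0 : ℝ) (0 : Fin n → ℍ[ℝ])).unique (hsnd ▸ this) |>.symm
  simp [ip, hτ]

lemma ip_lineVec {u : Fin n → ℍ[ℝ]} (hu : ∑ i, star (u i) * u i = 1) (p q : ℂ × ℂ) :
    ip n (lineVec u p) (lineVec u q) = (conj p.1 * q.1).re + (conj p.2 * q.2).re := by
  have hre : ∀ x y : ℍ[ℝ], ∑ i, (star (u i * x) * (u i * y)).re = (star x * y).re := fun x y =>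
    calc ∑ i, (star (u i * x) * (u i * y)).re
        = (∑ i, star (u i * x) * (u i * y)).re :=
          (map_sum (QuaternionAlgebra.reₗ (R := ℝ) (-1) 0 (-1))
            (fun i => star (u i * x) * (u i * y)) Finset.univ).symm
      _ = (star x * (∑ i, star (u i) * u i) * y).re := by
          simp only [star_mul, Finset.mul_sum, Finset.sum_mul, mul_assoc]
      _ = (star x * y).re := by rw [hu, mul_one]
  simp only [ip, lineVec_apply, Pi.zero_apply, star_zero, zero_mul, Quaternion.re_zero,
    Finset.sum_const_zero, zero_add, hre, re_star_cq_mul_cq]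

lemma act_lineVec_of_inIso {u : Fin n → ℍ[ℝ]} {g : AA n} (hg : inIso n r s (u, 0) g)
    (p : ℂ × ℂ) :
    act n r s g (lineVec u p) = lineVec u (g.1 ^ (s - r) * p.1, g.1 ^ (-(r + s)) * p.2) := by
  obtain ⟨⟨hz, -⟩, hfix⟩ := hg
  have hz0 : g.1 ≠ 0 := norm_ne_zero_iff.mp (hz ▸ one_ne_zero)
  have hAu : ∀ i, g.2.mulVec u i = u i * czq (g.1 ^ (-r)) := fun i => by
    have h : g.2.mulVec u i * czq (g.1 ^ r) = u i := congrFun (congrArg Prod.fst hfix) i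
    rw [← h, mul_assoc, ← czq_mul, ← zpow_add₀ hz0, add_neg_cancel, zpow_zero, czq_one, mul_one]
  have hmulVec : ∀ x i, g.2.mulVec (fun j => u j * x) i = g.2.mulVec u i * x := fun x i => by
    simp only [Matrix.mulVec, dotProduct, Finset.sum_mul, mul_assoc]
  have hconj : conj (g.1 ^ s) = g.1 ^ (-s) := by
    rw [map_zpow₀, ← Complex.inv_eq_conj hz, inv_zpow, zpow_neg]
  refine Prod.ext (funext fun i => by simp [act, lineVec_apply]) (funext fun i => ?_)
  change g.2.mulVec (fun j => u j * cq p.1 p.2) i * czq (g.1 ^ s) = _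
  rw [hmulVec, hAu, mul_assoc, mul_assoc, ← mul_assoc (czq _), czq_mul_cq_mul_czq, hconj,
    mul_right_comm, ← zpow_add₀ hz0, mul_right_comm _ p.2, ← zpow_add₀ hz0, neg_add_eq_sub,
    ← neg_add]
  rfl

def isoCurve (u : Fin n → ℍ[ℝ]) (m : ℤ) (t : ℝ) : AA n :=
  (Complex.exp (t * Complex.I), lineRot u (czq (Complex.exp (t * Complex.I) ^ m)))

lemma isoCurve_zero (u : Fin n → ℍ[ℝ]) (m : ℤ) : isoCurve u m 0 = 1 :=
  Prod.ext (by simp [isoCurve]) (by simp [isoCurve, czq_one, lineRot_one])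

lemma isoCurve_mem_inIso {u : Fin n → ℍ[ℝ]} (hu : ∑ i, star (u i) * u i = 1) (t : ℝ) :
    inIso n r s (u, 0) (isoCurve u (-r) t) := by
  have hw : ‖Complex.exp (t * Complex.I)‖ = 1 := Complex.norm_exp_ofReal_mul_I t
  have hw0 : Complex.exp (t * Complex.I) ≠ 0 := Complex.exp_ne_zero _
  refine ⟨⟨hw, lineRot_mem_unitary hu (czq_mem_unitary (by rw [norm_zpow, hw, one_zpow]))⟩, ?_⟩
  refine Prod.ext (funext fun i => ?_) (funext fun i => by simp [act])
  have hmulVec := congrFun (lineRot_mulVec hu (czq (Complex.exp (t * Complex.I) ^ (-r))) 1) i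
  simp only [mul_one] at hmulVec
  change (lineRot u _).mulVec u i * czq (Complex.exp (t * Complex.I) ^ r) = u i
  rw [hmulVec, mul_assoc, ← czq_mul, ← zpow_add₀ hw0, neg_add_cancel, zpow_zero, czq_one, mul_one]

lemma lineVec_mem_orbitTangent {u : Fin n → ℍ[ℝ]} (hu : ∑ i, star (u i) * u i = 1)
    (p : ℂ × ℂ) :
    lineVec u (Complex.I * (s - r : ℤ) * p.1, Complex.I * (-(r + s) : ℤ) * p.2)
      ∈ orbitTangent n r s (inIso n r s (u, 0)) (lineVec u p) := by
  refine ⟨isoCurve u (-r), isoCurve_mem_inIso hu, isoCurve_zero u (-r), ?_⟩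
  have hcurve : (fun t => act n r s (isoCurve u (-r) t) (lineVec u p))
      = fun t : ℝ => lineVec u (Complex.exp (t * Complex.I) ^ (s - r) * p.1,
          Complex.exp (t * Complex.I) ^ (-(r + s)) * p.2) :=
    funext fun t => act_lineVec_of_inIso (isoCurve_mem_inIso hu t) p
  rw [hcurve]
  exact (lineVec u).hasFDerivAt.comp_hasDerivAt 0
    (((hasDerivAt_exp_mul_I_zpow _).mul_const p.1).prodMk
      ((hasDerivAt_exp_mul_I_zpow _).mul_const p.2))

lemma mul_im_conj_add_mul_im_conj_eq_zero {u : Fin n → ℍ[ℝ]} (hu : ∑ i, star (u i) * u i = 1)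
    {Sig : Set (VV n)}
    (horth : ∀ σ ∈ Sig, ∀ w ∈ orbitTangent n r s (inIso n r s (u, 0)) σ, ∀ τ ∈ Sig, ip n w τ = 0)
    {p q : ℂ × ℂ} (hp : lineVec u p ∈ Sig) (hq : lineVec u q ∈ Sig) :
    ((s - r : ℤ) : ℝ) * (conj p.1 * q.1).im + ((-(r + s) : ℤ) : ℝ) * (conj p.2 * q.2).im = 0 := by
  have h := horth _ hp _ (lineVec_mem_orbitTangent hu p) _ hq
  rw [ip_lineVec hu] at h
  simpa only [← Complex.ofReal_intCast, re_conj_I_mul_mul] using h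

lemma not_sliceIsPolarAt_of_weights_ne_zero {u : Fin n → ℍ[ℝ]}
    (hu : ∑ i, star (u i) * u i = 1) (hk : s - r ≠ 0) (hl : r + s ≠ 0) :
    ¬SliceIsPolarAt n r s (u, 0) := by
  rintro ⟨Sig, -, hmeet, horth⟩
  have hmove : ∀ p : ℂ × ℂ, ∃ z : ℂ, ‖z‖ = 1 ∧
      lineVec u (z ^ (s - r) * p.1, z ^ (-(r + s)) * p.2) ∈ Sig := fun p => by
    obtain ⟨g, hg, hgSig⟩ := hmeet (lineVec u p) (zero_prod_mem_normalSet u _)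
    exact ⟨g.1, hg.1.1, act_lineVec_of_inIso hg p ▸ hgSig⟩
  have hunit : ∀ {z : ℂ} (m : ℤ), ‖z‖ = 1 → ‖z ^ m‖ = 1 := fun m hz => by
    rw [norm_zpow, hz, one_zpow]
  obtain ⟨z₁, hz₁, h₁⟩ := hmove (1, 0)
  obtain ⟨z₂, hz₂, h₂⟩ := hmove (0, 1)
  simp only [mul_one, mul_zero] at h₁ h₂
  have hcover : {w : ℂ | ‖w‖ = 1} ⊆ {w : ℂ | ∃ z : ℂ,
      (z ^ (s - r) = z₁ ^ (s - r) ∨ z ^ (s - r) = -z₁ ^ (s - r)) ∧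
      (w = z₂ ^ (-(r + s)) * z ^ (r + s) ∨ w = -(z₂ ^ (-(r + s)) * z ^ (r + s)))} := by
    intro w (hw : ‖w‖ = 1)
    obtain ⟨z, hz, h⟩ := hmove (1, w)
    have hz0 : z ≠ 0 := norm_ne_zero_iff.mp (hz ▸ one_ne_zero)
    have e₁ := mul_im_conj_add_mul_im_conj_eq_zero hu horth h₁ h
    have e₂ := mul_im_conj_add_mul_im_conj_eq_zero hu horth h₂ h
    simp only [map_zero, zero_mul, Complex.zero_im, mul_zero, add_zero, zero_add, mul_one]
      at e₁ e₂
    have hA := eq_or_eq_neg_of_im_conj_mul_eq_zero (hunit _ hz₁) (hunit _ hz)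
      ((mul_eq_zero.mp e₁).resolve_left (by exact_mod_cast hk))
    have hB := eq_or_eq_neg_of_im_conj_mul_eq_zero (hunit _ hz₂)
      (by rw [norm_mul, hunit _ hz, hw, one_mul])
      ((mul_eq_zero.mp e₂).resolve_left (by exact_mod_cast neg_ne_zero.mpr hl))
    have hw_eq : w = z ^ (-(r + s)) * w * z ^ (r + s) := by
      rw [mul_right_comm, ← zpow_add₀ hz0, neg_add_cancel, zpow_zero, one_mul]
    refine ⟨z, hA, ?_⟩
    rcases hB with hB | hB <;> rw [hw_eq, hB]
    · exact .inl rfl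
    · exact .inr (neg_mul _ _)
  exact infinite_setOf_norm_eq_one ((finite_setOf_eq_mul_zpow hk _ _ _).subset hcover)

end Slice

theorem slice_at_u0_nonpolar_of_weights_ne
    (u : Fin n → ℍ[ℝ]) (hu : (∑ i, (star (u i) * u i).re) = 1) :
    ((r ≠ s ∧ r ≠ -s) → ¬SliceIsPolarAt n r s (u, 0)) ∧
    (InfinitesimallyPolar n r s → r = s ∨ r = -s) := by
  have hnonpolar : (r ≠ s ∧ r ≠ -s) → ¬SliceIsPolarAt n r s (u, 0) := fun ⟨hrs, hrs'⟩ =>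
    not_sliceIsPolarAt_of_weights_ne_zero (sum_star_mul_self_eq_one hu)
      (sub_ne_zero.mpr (Ne.symm hrs)) (fun h => hrs' (eq_neg_of_add_eq_zero_left h))
  refine ⟨hnonpolar, fun hpolar => ?_⟩
  have hp : ((u, 0) : VV n) ≠ 0 := fun h => by
    simp [show u = 0 from congrArg Prod.fst h] at hu
  by_contra! hrs
  exact hnonpolar hrs (hpolar _ hp)

end
end

section
/- Let G be a compact Lie group acting isometrically on a complete Riemannian manifold M, let H be the isotropy group of some point, N the normalizer of H in G, F⁰ the set of points of M whose isotropy group equals H, and F the closure of F⁰. Then F⁰ and F are N-invariant, and the induced map I : F⁰/N → M/G on quotient metric spaces is injective with image equal to the H-isotropy stratum (the set of orbits of points whose isotropy group is conjugate to H). -/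
/-!
If `stabilizer G x = H` then `stabilizer G (g • x)` is the conjugate `g H g⁻¹`, and this equals `H`
exactly when `g` normalizes `H`. Hence `N` preserves the points with isotropy exactly `H` (and, acting
by isometries, their closure), any `g` carrying one such point to another lies in `N`, and the
`G`-translates of these points are precisely the points with isotropy conjugate to `H`.
-/

open MulAction

section StabilizerConj

variable {G M : Type*} [Group G] [MulAction G M] {H : Subgroup G}

theorem stabilizer_smul_eq_map_conj_iff (g : G) (x : M) :
    stabilizer G (g • x) = H.map (MulAut.conj g).toMonoidHom ↔ stabilizer G x = H := by
  rw [stabilizer_smul_eq_stabilizer_map_conj]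
  exact (Subgroup.map_injective (MulAut.conj g).injective).eq_iff

theorem stabilizer_smul_eq_iff_mem_normalizer {x : M} (hx : stabilizer G x = H) (g : G) :
    stabilizer G (g • x) = H ↔ g ∈ Subgroup.normalizer (H : Set G) := by
  rw [stabilizer_smul_eq_stabilizer_map_conj, hx]
  exact Subgroup.mem_normalizer_iff_map_conj_eq.symm

theorem exists_smul_eq_of_stabilizer_eq_iff (y : M) :
    (∃ x, stabilizer G x = H ∧ ∃ g : G, g • x = y) ↔
      ∃ g : G, stabilizer G y = H.map (MulAut.conj g).toMonoidHom := by
  constructor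
  · rintro ⟨x, hx, g, rfl⟩
    exact ⟨g, (stabilizer_smul_eq_map_conj_iff g x).2 hx⟩
  · rintro ⟨g, hy⟩
    rw [← smul_inv_smul g y, stabilizer_smul_eq_map_conj_iff] at hy
    exact ⟨g⁻¹ • y, hy, g, smul_inv_smul g y⟩

end StabilizerConj

theorem strata_reduction_map_injective_image_stratum_general
    {G M : Type*} [Group G]
    [MetricSpace M] [MulAction G M]
    (hiso : ∀ g : G, Isometry fun x : M => g • x)
    (H N : Subgroup G)
    (hN : N = Subgroup.normalizer (H : Set G))
    (F0 F : Set M)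
    (hF0 : F0 = {x : M | MulAction.stabilizer G x = H}) (hF : F = closure F0) :
    (∀ g ∈ N, ∀ x ∈ F0, g • x ∈ F0) ∧
    (∀ g ∈ N, ∀ x ∈ F, g • x ∈ F) ∧
    (∀ x ∈ F0, ∀ y ∈ F0, (∃ g : G, g • x = y) → ∃ g ∈ N, g • x = y) ∧
    {y : M | ∃ x ∈ F0, ∃ g : G, g • x = y} =
      {y : M | ∃ g : G, MulAction.stabilizer G y = H.map (MulAut.conj g).toMonoidHom} := by
  subst hN hF0 hF
  have invariant : ∀ g ∈ Subgroup.normalizer (H : Set G),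
      Set.MapsTo (g • ·) {x : M | stabilizer G x = H} {x : M | stabilizer G x = H} :=
    fun g hg _ hx => (stabilizer_smul_eq_iff_mem_normalizer hx g).2 hg
  refine ⟨fun g hg _ hx => invariant g hg hx,
    fun g hg _ hx => (invariant g hg).closure (hiso g).continuous hx, ?_, ?_⟩
  · rintro x hx _ hy ⟨g, rfl⟩
    exact ⟨g, (stabilizer_smul_eq_iff_mem_normalizer hx g).1 hy, rfl⟩
  · ext y
    exact exists_smul_eq_of_stabilizer_eq_iff y

/-- Let a compact group `G` act isometrically on a complete connected metric space `M`,
let `H` be the isotropy group of a point `p₀`, `N` the normalizer of `H` in `G`, `F⁰` the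
set of points of `M` whose isotropy group is exactly `H`, and `F` the closure of `F⁰`.
Then `F⁰` and `F` are `N`-invariant, the induced map `F⁰/N → M/G` is injective (two points
of `F⁰` in the same `G`-orbit lie in the same `N`-orbit), and its image is exactly the
`H`-isotropy stratum, i.e. the set of orbits of points whose isotropy group is conjugate
to `H`. -/
theorem strata_reduction_map_injective_image_stratum
    {G M : Type*} [Group G] [TopologicalSpace G] [IsTopologicalGroup G] [CompactSpace G]
    [MetricSpace M] [CompleteSpace M] [ConnectedSpace M] [MulAction G M]
    (hiso : ∀ g : G, Isometry fun x : M => g • x)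
    (hcont : Continuous fun q : G × M => q.1 • q.2)
    (p₀ : M) (H N : Subgroup G)
    (hH : H = MulAction.stabilizer G p₀) (hN : N = Subgroup.normalizer (H : Set G))
    (F0 F : Set M)
    (hF0 : F0 = {x : M | MulAction.stabilizer G x = H}) (hF : F = closure F0) :
    (∀ g ∈ N, ∀ x ∈ F0, g • x ∈ F0) ∧
    (∀ g ∈ N, ∀ x ∈ F, g • x ∈ F) ∧
    (∀ x ∈ F0, ∀ y ∈ F0, (∃ g : G, g • x = y) → ∃ g ∈ N, g • x = y) ∧
    {y : M | ∃ x ∈ F0, ∃ g : G, g • x = y} =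
      {y : M | ∃ g : G, MulAction.stabilizer G y = H.map (MulAut.conj g).toMonoidHom} :=
  strata_reduction_map_injective_image_stratum_general hiso H N hN F0 F hF0 hF
end
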